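/- arXiv:math/0602217 — 5 statements merged into one kernel-verified Lean document; each statement's English description precedes it below -/
import Mathlib

section
/- Let f_0 ∈ H_1 and let h be a real nonnegative function on X bounded by 1. Let C* be a symmetric subset of H (C* = −C*) such that for ζ-almost every x ∈ X the function θ ↦ h(x)π_θ(x) belongs to the orthogonal complement of C* in H. Then inf over f̂ ∈ S_n of sup over f ∈ (f_0 + C*) ∩ H_1 of E_f‖f̂ − f‖_H² is at least sup{ ‖f‖_H² : f ∈ C*, f_0 + f ∈ H_1 and f_0 − f ∈ H_1 } multiplied by (π_{f_0} h)^n, where π_{f_0} h = ∫_X h dπ_{f_0}. -/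
/-! Two-point argument. For `f ∈ C*` with `f₀ ± f ∈ H₁`, write `p_g(x) = ∫ π_θ(x) g(θ) dν`.
Since `h(x) p_g(x) = ⟪h(x) π_·(x), g⟫` is linear in `g` and `h(x) π_·(x) ⊥ f`, we get
`h(x) p_{f₀}(x) = h(x) p_{f₀ ± f}(x) ≤ p_{f₀ ± f}(x)`, so the measure `Q = p_{f₀} h · ζ`, of mass
`π_{f₀} h`, lies below both `π_{f₀ + f}` and `π_{f₀ - f}`, and `Q^{⊗n}` below both product laws.
By the parallelogram law `‖a - (f₀ + f)‖² + ‖a - (f₀ - f)‖² ≥ 2 ‖f‖²` for every estimate `a`, so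
integrating against `Q^{⊗n}` shows that one of the two risks is at least `‖f‖² (π_{f₀} h)^n`. -/

open MeasureTheory ENNReal

noncomputable section

/-- The mixture distribution `π_f` on `X`. -/
def mixX {X : Type*} [MeasurableSpace X] (ζ : Measure X)
    {α : Type*} [MeasurableSpace α] (ν : Measure α) (π : α → X → ℝ)
    (f : Lp ℝ 2 ν) : Measure X :=
  ζ.withDensity fun x => ENNReal.ofReal (∫ θ, π θ x * f θ ∂ν)

/-- Probability densities belonging to `H`. -/
def H1 {α : Type*} [MeasurableSpace α] (ν : Measure α) : Set (Lp ℝ 2 ν) :=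
  {f | 0 ≤ᵐ[ν] ⇑f ∧ ∫ θ, f θ ∂ν = 1}

open scoped RealInnerProductSpace

theorem MeasureTheory.Measure.pi_mono {ι : Type*} [Fintype ι] {α : ι → Type*}
    [∀ i, MeasurableSpace (α i)] {μ μ' : ∀ i, Measure (α i)} (h : ∀ i, μ i ≤ μ' i) :
    Measure.pi μ ≤ Measure.pi μ' := by
  refine Measure.le_iff.2 fun s hs => ?_
  rw [Measure.pi, Measure.pi, toMeasure_apply _ _ hs, toMeasure_apply _ _ hs]
  refine (OuterMeasure.le_pi.2 fun t _ => ?_) s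
  exact (OuterMeasure.pi_pi_le _ t).trans (Finset.prod_le_prod' fun i _ => h i _)

theorem two_mul_enorm_sq_le_enorm_sub_add_sq_add_enorm_sub_sub_sq
    {E : Type*} [NormedAddCommGroup E] [InnerProductSpace ℝ E] (a b f : E) :
    2 * ‖f‖ₑ ^ 2 ≤ ‖a - (b + f)‖ₑ ^ 2 + ‖a - (b - f)‖ₑ ^ 2 := by
  have hpar := parallelogram_law_with_norm ℝ (a - b) f
  have hreal : 2 * ‖f‖ ^ 2 ≤ ‖a - (b + f)‖ ^ 2 + ‖a - (b - f)‖ ^ 2 := by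
    rw [sub_add_eq_sub_sub, ← sub_add]
    nlinarith [mul_self_nonneg ‖a - b‖]
  simpa only [← ofReal_norm, ← ENNReal.ofReal_pow (norm_nonneg _), ← ENNReal.ofReal_add
    (sq_nonneg _) (sq_nonneg _), ENNReal.ofReal_mul zero_le_two, ENNReal.ofReal_ofNat]
    using ENNReal.ofReal_le_ofReal hreal

theorem enorm_sq_mul_measure_univ_le_max_lintegral
    {Ω E : Type*} [MeasurableSpace Ω] [NormedAddCommGroup E] [InnerProductSpace ℝ E]
    [MeasurableSpace E] [OpensMeasurableSpace E]
    {Q P₁ P₂ : Measure Ω} (h₁ : Q ≤ P₁) (h₂ : Q ≤ P₂) {est : Ω → E} (hest : Measurable est)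
    (b f : E) :
    ‖f‖ₑ ^ 2 * Q Set.univ ≤
      max (∫⁻ ω, ‖est ω - (b + f)‖ₑ ^ 2 ∂P₁) (∫⁻ ω, ‖est ω - (b - f)‖ₑ ^ 2 ∂P₂) := by
  have hmeas : Measurable fun ω => ‖est ω - (b + f)‖ₑ ^ 2 :=
    ((continuous_enorm.comp (continuous_sub_right (b + f))).measurable.comp hest).pow_const 2
  refine (ENNReal.mul_le_mul_iff_right (a := 2) two_ne_zero ofNat_ne_top).1 ?_
  calc 2 * (‖f‖ₑ ^ 2 * Q Set.univ) = ∫⁻ _, 2 * ‖f‖ₑ ^ 2 ∂Q := by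
        rw [lintegral_const, mul_assoc]
    _ ≤ ∫⁻ ω, ‖est ω - (b + f)‖ₑ ^ 2 + ‖est ω - (b - f)‖ₑ ^ 2 ∂Q :=
        lintegral_mono fun ω => two_mul_enorm_sq_le_enorm_sub_add_sq_add_enorm_sub_sub_sq _ _ _
    _ = ∫⁻ ω, ‖est ω - (b + f)‖ₑ ^ 2 ∂Q + ∫⁻ ω, ‖est ω - (b - f)‖ₑ ^ 2 ∂Q :=
        lintegral_add_left hmeas _
    _ ≤ ∫⁻ ω, ‖est ω - (b + f)‖ₑ ^ 2 ∂P₁ + ∫⁻ ω, ‖est ω - (b - f)‖ₑ ^ 2 ∂P₂ := by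
        gcongr
    _ ≤ 2 * max (∫⁻ ω, ‖est ω - (b + f)‖ₑ ^ 2 ∂P₁) (∫⁻ ω, ‖est ω - (b - f)‖ₑ ^ 2 ∂P₂) := by
        rw [two_mul]
        exact add_le_add (le_max_left _ _) (le_max_right _ _)

section Mixture

variable {X α : Type*} [MeasurableSpace α] {ν : Measure α} {π : α → X → ℝ}

theorem integral_mul_nonneg_of_mem_H1 (hπ : ∀ θ x, 0 ≤ π θ x) {g : Lp ℝ 2 ν} (hg : g ∈ H1 ν)
    (x : X) : 0 ≤ ∫ θ, π θ x * g θ ∂ν :=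
  integral_nonneg_of_ae <| hg.1.mono fun θ hθ => mul_nonneg (hπ θ x) hθ

theorem mul_integral_mul_eq_inner {φ : α → ℝ} {c : ℝ} {u : Lp ℝ 2 ν}
    (hu : ⇑u =ᵐ[ν] fun θ => c * φ θ) (g : Lp ℝ 2 ν) :
    c * ∫ θ, φ θ * g θ ∂ν = ⟪u, g⟫ := by
  rw [L2.inner_def, ← integral_const_mul]
  refine integral_congr_ae ?_
  filter_upwards [hu] with θ hθ
  simp [hθ, mul_assoc, mul_comm]

variable [MeasurableSpace X] {ζ : Measure X}

theorem measurable_integral_mul [SFinite ν] (hπ : Measurable (Function.uncurry π))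
    (g : Lp ℝ 2 ν) : Measurable fun x => ∫ θ, π θ x * g θ ∂ν :=
  (((hπ.comp measurable_swap).stronglyMeasurable.mul
    ((Lp.stronglyMeasurable g).comp_measurable measurable_snd)).integral_prod_right').measurable

theorem lintegral_ofReal_mixX [SFinite ν] (hπ : Measurable (Function.uncurry π))
    (hπ_nonneg : ∀ θ x, 0 ≤ π θ x) {f₀ : Lp ℝ 2 ν} (hf₀ : f₀ ∈ H1 ν) (h : X → ℝ) :
    ∫⁻ x, ENNReal.ofReal (h x) ∂mixX ζ ν π f₀ =
      ζ.withDensity (fun x => ENNReal.ofReal ((∫ θ, π θ x * f₀ θ ∂ν) * h x)) Set.univ := by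
  rw [mixX, lintegral_withDensity_eq_lintegral_mul_non_measurable _
      (measurable_integral_mul hπ f₀).ennreal_ofReal (ae_of_all _ fun _ => ofReal_lt_top),
    withDensity_apply _ MeasurableSet.univ, Measure.restrict_univ]
  simp only [Pi.mul_apply, ENNReal.ofReal_mul (integral_mul_nonneg_of_mem_H1 hπ_nonneg hf₀ _)]

theorem withDensity_le_mixX (hπ : ∀ θ x, 0 ≤ π θ x) {h : X → ℝ} (hh : ∀ x, h x ≤ 1)
    {f₀ c : Lp ℝ 2 ν} (hc : f₀ + c ∈ H1 ν)
    (hperp : ∀ᵐ x ∂ζ, ∃ u : Lp ℝ 2 ν, ⇑u =ᵐ[ν] (fun θ => h x * π θ x) ∧ ⟪u, c⟫ = 0) :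
    ζ.withDensity (fun x => ENNReal.ofReal ((∫ θ, π θ x * f₀ θ ∂ν) * h x)) ≤
      mixX ζ ν π (f₀ + c) := by
  refine withDensity_mono ?_
  filter_upwards [hperp] with x ⟨u, hu, hc_perp⟩
  refine ENNReal.ofReal_le_ofReal ?_
  calc (∫ θ, π θ x * f₀ θ ∂ν) * h x = h x * ∫ θ, π θ x * (f₀ + c) θ ∂ν := by
        rw [mul_comm, mul_integral_mul_eq_inner hu, mul_integral_mul_eq_inner hu, inner_add_right,
          hc_perp, add_zero]
    _ ≤ ∫ θ, π θ x * (f₀ + c) θ ∂ν :=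
        mul_le_of_le_one_left (integral_mul_nonneg_of_mem_H1 hπ hc x) (hh x)

end Mixture

theorem statement1_general
    {X : Type*} [MeasurableSpace X] (ζ : Measure X) [SigmaFinite ζ]
    {d : ℕ} {Θ : Set (Fin d → ℝ)}
    (ν : Measure Θ) [SigmaFinite ν]
    (π : Θ → X → ℝ)
    (hπ_meas : Measurable (Function.uncurry π))
    (hπ_nonneg : ∀ θ x, 0 ≤ π θ x)
    (n : ℕ)
    (f₀ : Lp ℝ 2 ν) (hf₀ : f₀ ∈ H1 ν)
    (h : X → ℝ) (hh_le_one : ∀ x, h x ≤ 1)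
    (Cstar : Set (Lp ℝ 2 ν))
    (hC_symm : ∀ f ∈ Cstar, -f ∈ Cstar)
    -- for ζ-a.e. x, the map θ ↦ h(x) π_θ(x) belongs to the orthogonal complement of C*
    (hC_perp : ∀ᵐ x ∂ζ, ∃ gx : Lp ℝ 2 ν,
      ⇑gx =ᵐ[ν] (fun θ => h x * π θ x) ∧ ∀ c ∈ Cstar, (inner ℝ gx c : ℝ) = 0) :
    (⨆ (f : Lp ℝ 2 ν) (_ : f ∈ Cstar ∧ f₀ + f ∈ H1 ν ∧ f₀ - f ∈ H1 ν),
        ENNReal.ofReal (‖f‖ ^ 2)) *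
      (∫⁻ x, ENNReal.ofReal (h x) ∂(mixX ζ ν π f₀)) ^ n
    ≤ ⨅ (fhat : (Fin n → X) → Lp ℝ 2 ν) (_ : @Measurable _ _ _ (borel _) fhat),
        ⨆ (f : Lp ℝ 2 ν) (_ : f ∈ {f | ∃ g ∈ Cstar, f = f₀ + g} ∩ H1 ν),
          ∫⁻ x, (‖fhat x - f‖₊ : ℝ≥0∞) ^ 2
            ∂(Measure.pi fun _ : Fin n => mixX ζ ν π f) := by
  let _ : MeasurableSpace (Lp ℝ 2 ν) := borel _
  have _ : BorelSpace (Lp ℝ 2 ν) := ⟨rfl⟩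
  set Q := ζ.withDensity fun x => ENNReal.ofReal ((∫ θ, π θ x * f₀ θ ∂ν) * h x)
  have hQ_le : ∀ c ∈ Cstar, f₀ + c ∈ H1 ν → Q ≤ mixX ζ ν π (f₀ + c) := fun c hc hc₁ =>
    withDensity_le_mixX hπ_nonneg hh_le_one hc₁ <|
      hC_perp.mono fun x ⟨u, hu, hu_perp⟩ => ⟨u, hu, hu_perp c hc⟩
  have hQ_pi : (Measure.pi fun _ : Fin n => Q) Set.univ = Q Set.univ ^ n := by
    simp [Measure.pi_univ]
  rw [lintegral_ofReal_mixX hπ_meas hπ_nonneg hf₀, ← hQ_pi, ENNReal.iSup_mul]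
  refine le_iInf₂ fun fhat hfhat => iSup_le fun f => ?_
  rw [ENNReal.iSup_mul]
  refine iSup_le fun ⟨hfC, hf₁, hf₂⟩ => ?_
  have hQ₂ : Q ≤ mixX ζ ν π (f₀ - f) := by
    rw [sub_eq_add_neg] at hf₂ ⊢
    exact hQ_le (-f) (hC_symm f hfC) hf₂
  calc ENNReal.ofReal (‖f‖ ^ 2) * (Measure.pi fun _ => Q) Set.univ
      = ‖f‖ₑ ^ 2 * (Measure.pi fun _ => Q) Set.univ := by
        rw [ENNReal.ofReal_pow (norm_nonneg _), ofReal_norm]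
    _ ≤ max (∫⁻ x, ‖fhat x - (f₀ + f)‖ₑ ^ 2 ∂Measure.pi fun _ => mixX ζ ν π (f₀ + f))
          (∫⁻ x, ‖fhat x - (f₀ - f)‖ₑ ^ 2 ∂Measure.pi fun _ => mixX ζ ν π (f₀ - f)) :=
        enorm_sq_mul_measure_univ_le_max_lintegral
          (Measure.pi_mono fun _ => hQ_le f hfC hf₁) (Measure.pi_mono fun _ => hQ₂) hfhat f₀ f
    _ ≤ _ := max_le (le_iSup₂_of_le (f₀ + f) ⟨⟨f, hfC, rfl⟩, hf₁⟩ le_rfl)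
        (le_iSup₂_of_le (f₀ - f) ⟨⟨-f, hC_symm f hfC, sub_eq_add_neg f₀ f⟩, hf₂⟩ le_rfl)

theorem statement1
    {X : Type*} [MeasurableSpace X] (ζ : Measure X) [SigmaFinite ζ]
    {d : ℕ} {Θ : Set (Fin d → ℝ)} (hΘ : MeasurableSet Θ)
    (ν : Measure Θ) [SigmaFinite ν]
    (π : Θ → X → ℝ)
    (hπ_meas : Measurable (Function.uncurry π))
    (hπ_nonneg : ∀ θ x, 0 ≤ π θ x)
    (hπ_int : ∀ θ, ∫ x, π θ x ∂ζ = 1)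
    (n : ℕ) (hn : 0 < n)
    (f₀ : Lp ℝ 2 ν) (hf₀ : f₀ ∈ H1 ν)
    (h : X → ℝ) (hh_meas : Measurable h)
    (hh_nonneg : ∀ x, 0 ≤ h x) (hh_le_one : ∀ x, h x ≤ 1)
    (Cstar : Set (Lp ℝ 2 ν))
    (hC_symm : ∀ f ∈ Cstar, -f ∈ Cstar)
    -- for ζ-a.e. x, the map θ ↦ h(x) π_θ(x) belongs to the orthogonal complement of C*
    (hC_perp : ∀ᵐ x ∂ζ, ∃ gx : Lp ℝ 2 ν,
      ⇑gx =ᵐ[ν] (fun θ => h x * π θ x) ∧ ∀ c ∈ Cstar, (inner ℝ gx c : ℝ) = 0) :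
    (⨆ (f : Lp ℝ 2 ν) (_ : f ∈ Cstar ∧ f₀ + f ∈ H1 ν ∧ f₀ - f ∈ H1 ν),
        ENNReal.ofReal (‖f‖ ^ 2)) *
      (∫⁻ x, ENNReal.ofReal (h x) ∂(mixX ζ ν π f₀)) ^ n
    ≤ ⨅ (fhat : (Fin n → X) → Lp ℝ 2 ν) (_ : @Measurable _ _ _ (borel _) fhat),
        ⨆ (f : Lp ℝ 2 ν) (_ : f ∈ {f | ∃ g ∈ Cstar, f = f₀ + g} ∩ H1 ν),
          ∫⁻ x, (‖fhat x - f‖₊ : ℝ≥0∞) ^ 2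
            ∂(Measure.pi fun _ : Fin n => mixX ζ ν π f) :=
  statement1_general ζ ν π hπ_meas hπ_nonneg n f₀ hf₀ h hh_le_one Cstar hC_symm hC_perp

end
end

section
/- Let ν be a σ-finite Radon measure on a Borel set Θ ⊆ ℝ^d, H = L²(ν), and let f_0 ∈ H with f_0 ≥ 0. Then for every f ∈ H: ν-ess sup_θ |f(θ)|/f_0(θ) = sup over g ∈ H of |(f,g)_H| / (f_0,|g|)_H, with the conventions 0/0 = 0 and s/0 = ∞ for s > 0 on both sides. -/
/-!
If `|f| ≤ M f₀` a.e., then `|(f, g)| ≤ ∫ |f| |g| ≤ M (f₀, |g|)` for every `g`, so each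
quotient is at most the essential supremum. Conversely, for `c` below the essential supremum
the set `S = {|f| > c f₀}` has positive measure, and `g = 1_S f` lies in `L²` with
`(f, g) = ∫_S f² ≥ c ∫_S f₀ |f| = c (f₀, |g|)`; since `∫_S f² > 0`, the quotient is `≥ c`
even when `(f₀, |g|) = 0`.
-/

open MeasureTheory ENNReal

namespace MeasureTheory

variable {α : Type*} {f f₀ g g' : α → ℝ}

noncomputable def absRatio (f f₀ : α → ℝ) (x : α) : ℝ≥0∞ :=
  ENNReal.ofReal |f x| / ENNReal.ofReal (f₀ x)

theorem ne_zero_of_lt_absRatio {c : ℝ≥0∞} {x : α} (hx : c < absRatio f f₀ x) : f x ≠ 0 :=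
  fun h0 => by simp [absRatio, h0] at hx

theorem mul_ofReal_le_of_le_absRatio {c : ℝ≥0∞} {x : α} (hx : c ≤ absRatio f f₀ x) :
    c * ENNReal.ofReal (f₀ x * |f x|) ≤ ENNReal.ofReal (f x * f x) :=
  calc c * ENNReal.ofReal (f₀ x * |f x|)
      = c * ENNReal.ofReal (f₀ x) * ENNReal.ofReal |f x| := by
        rw [ENNReal.ofReal_mul' (abs_nonneg _), mul_assoc]
    _ ≤ ENNReal.ofReal |f x| * ENNReal.ofReal |f x| := by gcongr; exact mul_le_of_le_div hx
    _ = ENNReal.ofReal (f x * f x) := by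
        rw [← ENNReal.ofReal_mul (abs_nonneg _), abs_mul_abs_self]

variable [MeasurableSpace α]

noncomputable def pairingRatio (μ : Measure α) (f f₀ g : α → ℝ) : ℝ≥0∞ :=
  ENNReal.ofReal |∫ x, f x * g x ∂μ| / ENNReal.ofReal (∫ x, f₀ x * |g x| ∂μ)

variable {μ : Measure α}

theorem pairingRatio_congr_ae (h : g =ᵐ[μ] g') :
    pairingRatio μ f f₀ g = pairingRatio μ f f₀ g' := by
  have hfg : ∫ x, f x * g x ∂μ = ∫ x, f x * g' x ∂μ :=
    integral_congr_ae (by filter_upwards [h] with x hx; rw [hx])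
  have hf₀g : ∫ x, f₀ x * |g x| ∂μ = ∫ x, f₀ x * |g' x| ∂μ :=
    integral_congr_ae (by filter_upwards [h] with x hx; rw [hx])
  rw [pairingRatio, pairingRatio, hfg, hf₀g]

theorem measurable_absRatio (hf : Measurable f) (hf₀ : Measurable f₀) :
    Measurable (absRatio f f₀) :=
  (hf.abs.ennreal_ofReal).div hf₀.ennreal_ofReal

theorem pairingRatio_le_essSup_absRatio (hf₀ : 0 ≤ᵐ[μ] f₀)
    (hint : Integrable (fun x => f₀ x * |g x|) μ) :
    pairingRatio μ f f₀ g ≤ essSup (absRatio f f₀) μ := by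
  set M := essSup (absRatio f f₀) μ
  rcases eq_or_ne M ⊤ with hM | hM
  · exact hM ▸ le_top
  have hpt : ∀ᵐ x ∂μ, ENNReal.ofReal |f x| ≤ M * ENNReal.ofReal (f₀ x) :=
    (ENNReal.ae_le_essSup (absRatio f f₀)).mono fun x hx =>
      (ENNReal.div_le_iff_le_mul (Or.inr hM) (Or.inl ofReal_ne_top)).mp hx
  refine div_le_of_le_mul ?_
  calc ENNReal.ofReal |∫ x, f x * g x ∂μ| = ‖∫ x, f x * g x ∂μ‖ₑ :=
        (Real.enorm_eq_ofReal_abs _).symm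
    _ ≤ ∫⁻ x, ‖f x * g x‖ₑ ∂μ := enorm_integral_le_lintegral_enorm _
    _ ≤ ∫⁻ x, M * ENNReal.ofReal (f₀ x * |g x|) ∂μ := by
        refine lintegral_mono_ae (hpt.mono fun x hx => ?_)
        rw [enorm_mul, Real.enorm_eq_ofReal_abs, Real.enorm_eq_ofReal_abs,
          ENNReal.ofReal_mul' (abs_nonneg _), ← mul_assoc]
        gcongr
    _ = M * ∫⁻ x, ENNReal.ofReal (f₀ x * |g x|) ∂μ := lintegral_const_mul' _ _ hM
    _ = M * ENNReal.ofReal (∫ x, f₀ x * |g x| ∂μ) := by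
        rw [ofReal_integral_eq_lintegral_ofReal hint
          (hf₀.mono fun x hx => mul_nonneg hx (abs_nonneg _))]

theorem exists_memLp_le_pairingRatio (hf : Measurable f) (hf₀ : Measurable f₀)
    (hf₀_nonneg : 0 ≤ᵐ[μ] f₀) (hf2 : MemLp f 2 μ) (hf₀2 : MemLp f₀ 2 μ)
    {c : ℝ≥0∞} (hc : c < essSup (absRatio f f₀) μ) :
    ∃ g, MemLp g 2 μ ∧ c ≤ pairingRatio μ f f₀ g := by
  set S := {x | c < absRatio f f₀ x}
  have hS : MeasurableSet S := measurableSet_lt measurable_const (measurable_absRatio hf hf₀)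
  have hSpos : μ S ≠ 0 := fun h0 =>
    hc.not_ge (essSup_le_of_ae_le c (by rw [Filter.EventuallyLE, ae_iff]; simpa using h0))
  refine ⟨S.indicator f, hf2.indicator hS, ?_⟩
  have hN : ENNReal.ofReal (∫ x, f x * S.indicator f x ∂μ)
      = ∫⁻ x in S, ENNReal.ofReal (f x * f x) ∂μ := by
    simp_rw [← Set.indicator_mul_right, integral_indicator hS]
    exact ofReal_integral_eq_lintegral_ofReal (hf2.integrable_mul hf2).integrableOn
      (ae_of_all _ fun x => mul_self_nonneg (f x))
  have hD : ENNReal.ofReal (∫ x, f₀ x * |S.indicator f x| ∂μ)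
      = ∫⁻ x in S, ENNReal.ofReal (f₀ x * |f x|) ∂μ := by
    have habs (x : α) : |S.indicator f x| = S.indicator (fun x => |f x|) x := by
      by_cases hx : x ∈ S <;> simp [hx]
    simp_rw [habs, ← Set.indicator_mul_right, integral_indicator hS]
    exact ofReal_integral_eq_lintegral_ofReal (hf₀2.integrable_mul hf2.abs).integrableOn
      (ae_restrict_of_ae (hf₀_nonneg.mono fun x hx => mul_nonneg hx (abs_nonneg _)))
  have hNpos : ∫⁻ x in S, ENNReal.ofReal (f x * f x) ∂μ ≠ 0 := by
    refine ((setLIntegral_pos_iff (hf.mul hf).ennreal_ofReal).mpr ?_).ne'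
    refine (pos_iff_ne_zero.mpr hSpos).trans_le (measure_mono fun x hx => ⟨?_, hx⟩)
    exact (ENNReal.ofReal_pos.mpr (mul_self_pos.mpr (ne_zero_of_lt_absRatio hx))).ne'
  calc c ≤ ENNReal.ofReal (∫ x, f x * S.indicator f x ∂μ)
        / ENNReal.ofReal (∫ x, f₀ x * |S.indicator f x| ∂μ) := by
        rw [ENNReal.le_div_iff_mul_le (Or.inr (hN ▸ hNpos)) (Or.inl ofReal_ne_top), hN, hD]
        exact (lintegral_const_mul_le _ _).trans
          (setLIntegral_mono' hS fun x hx => mul_ofReal_le_of_le_absRatio (le_of_lt hx))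
    _ ≤ pairingRatio μ f f₀ (S.indicator f) := by
        rw [pairingRatio]
        gcongr
        exact le_abs_self _

end MeasureTheory

theorem statement4_general
    {d : ℕ} {Θ : Set (Fin d → ℝ)}
    (ν : Measure Θ)
    (f₀ : Lp ℝ 2 ν) (hf₀_nonneg : 0 ≤ᵐ[ν] ⇑f₀)
    (f : Lp ℝ 2 ν) :
    essSup (fun θ => ENNReal.ofReal |f θ| / ENNReal.ofReal (f₀ θ)) ν
      = ⨆ g : Lp ℝ 2 ν,
          ENNReal.ofReal |∫ θ, f θ * g θ ∂ν| /
            ENNReal.ofReal (∫ θ, f₀ θ * |g θ| ∂ν) := by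
  change essSup (absRatio f f₀) ν = ⨆ g : Lp ℝ 2 ν, pairingRatio ν f f₀ g
  refine le_antisymm (le_of_forall_lt_imp_le_of_dense fun c hc => ?_) (iSup_le fun g => ?_)
  · obtain ⟨g, hg, hcg⟩ := exists_memLp_le_pairingRatio (Lp.stronglyMeasurable f).measurable
      (Lp.stronglyMeasurable f₀).measurable hf₀_nonneg (Lp.memLp f) (Lp.memLp f₀) hc
    exact le_iSup_of_le (hg.toLp g) ((pairingRatio_congr_ae hg.coeFn_toLp).symm ▸ hcg)
  · exact pairingRatio_le_essSup_absRatio hf₀_nonneg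
      ((Lp.memLp f₀).integrable_mul (Lp.memLp g).abs)

theorem statement4
    {d : ℕ} {Θ : Set (Fin d → ℝ)} (hΘ : MeasurableSet Θ)
    (ν : Measure Θ) [SigmaFinite ν]
    [IsLocallyFiniteMeasure ν] [ν.InnerRegular]
    (f₀ : Lp ℝ 2 ν) (hf₀_nonneg : 0 ≤ᵐ[ν] ⇑f₀)
    (f : Lp ℝ 2 ν) :
    essSup (fun θ => ENNReal.ofReal |f θ| / ENNReal.ofReal (f₀ θ)) ν
      = ⨆ g : Lp ℝ 2 ν,
          ENNReal.ofReal |∫ θ, f θ * g θ ∂ν| /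
            ENNReal.ofReal (∫ θ, f₀ θ * |g θ| ∂ν) :=
  statement4_general ν f₀ hf₀_nonneg f
end

section
/- Let f_∞ ∈ H_+, u = (u_m)_{m≥0} a positive decreasing sequence and r a nonnegative integer. Assume f_0 ∈ H_1 and C_0 ≥ 0 are such that f_0 ∈ C(u,C_0,r). Then for any positive K and K' satisfying K'/(1+K) ≥ ‖f_0‖_{∞,f_∞} and any nonnegative C and C' satisfying C' − C ≥ C_0, the translated class satisfies f_0 + C_{f_0}(K,u,C,r) ⊆ C_{f_∞}(K',u,C',r). -/
/- Proposition 4 of Roueff–Rydén: if `f₀ ∈ H₁ ∩ C(u, C₀, r)`, `K'/(1+K) ≥ ‖f₀‖_{∞,f∞}`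
and `C' - C ≥ C₀`, then `f₀ + C_{f₀}(K,u,C,r) ⊆ C_{f∞}(K',u,C',r)`.
Here `H = L²(ν)`, `(V m)` is a nondecreasing sequence of finite-dimensional subspaces with
`V 0 = {0}`, `C(u,C,r) = {f : ‖f - Proj_{V m} f‖ ≤ C u m ∀ m ≥ r}` (the distance from `f`
to the closed subspace `V m` equals `‖f - Proj_{V m} f‖`), and
`‖f‖_{∞,g} = ν-ess sup |f|/g` with conventions `0/0 = 0`, `s/0 = ∞` (ℝ≥0∞-division). -/

open MeasureTheory ENNReal

theorem statement7
    {d : ℕ} {Θ : Set (Fin d → ℝ)} (hΘ : MeasurableSet Θ)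
    (ν : Measure Θ) [SigmaFinite ν]
    (V : ℕ → Submodule ℝ (Lp ℝ 2 ν)) (hV_mono : Monotone V)
    (hV_fin : ∀ m, FiniteDimensional ℝ (V m)) (hV0 : V 0 = ⊥)
    (u : ℕ → ℝ) (hu_pos : ∀ m, 0 < u m) (hu_dec : Antitone u)
    (r : ℕ)
    (finf : Lp ℝ 2 ν) (hfinf_nonneg : 0 ≤ᵐ[ν] ⇑finf)
    (f₀ : Lp ℝ 2 ν) (hf₀_nonneg : 0 ≤ᵐ[ν] ⇑f₀) (hf₀_int : ∫ θ, f₀ θ ∂ν = 1)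
    (C₀ : ℝ) (hC₀ : 0 ≤ C₀)
    (hf₀_class : ∀ m, r ≤ m → Metric.infDist f₀ (V m : Set (Lp ℝ 2 ν)) ≤ C₀ * u m)
    (K K' : ℝ) (hK : 0 < K) (hK' : 0 < K')
    (hKK' : essSup (fun θ => ENNReal.ofReal |f₀ θ| / ENNReal.ofReal (finf θ)) ν
              ≤ ENNReal.ofReal (K' / (1 + K)))
    (C C' : ℝ) (hC : 0 ≤ C) (hC' : 0 ≤ C') (hCC' : C₀ ≤ C' - C) :
    ∀ g : Lp ℝ 2 ν,
      ((∀ m, r ≤ m → Metric.infDist g (V m : Set (Lp ℝ 2 ν)) ≤ C * u m) ∧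
        essSup (fun θ => ENNReal.ofReal |g θ| / ENNReal.ofReal (f₀ θ)) ν
          ≤ ENNReal.ofReal K) →
      ((∀ m, r ≤ m →
          Metric.infDist (f₀ + g) (V m : Set (Lp ℝ 2 ν)) ≤ C' * u m) ∧
        essSup (fun θ => ENNReal.ofReal |(f₀ + g) θ| / ENNReal.ofReal (finf θ)) ν
          ≤ ENNReal.ofReal K') := by
  rintro g ⟨hg_class, hg_sup⟩
  constructor
  · -- infDist part
    intro m hm
    have hne : (V m : Set (Lp ℝ 2 ν)).Nonempty := ⟨0, (V m).zero_mem⟩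
    have key : Metric.infDist (f₀ + g) (V m : Set (Lp ℝ 2 ν)) ≤
        Metric.infDist f₀ (V m : Set (Lp ℝ 2 ν)) +
        Metric.infDist g (V m : Set (Lp ℝ 2 ν)) := by
      refine le_of_forall_pos_le_add fun ε hε => ?_
      obtain ⟨a, ha, hda⟩ := (Metric.infDist_lt_iff hne).1
        (lt_add_of_pos_right _ (half_pos hε) :
          Metric.infDist f₀ (V m : Set (Lp ℝ 2 ν)) <
          Metric.infDist f₀ (V m : Set (Lp ℝ 2 ν)) + ε / 2)
      obtain ⟨b, hb, hdb⟩ := (Metric.infDist_lt_iff hne).1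
        (lt_add_of_pos_right _ (half_pos hε) :
          Metric.infDist g (V m : Set (Lp ℝ 2 ν)) <
          Metric.infDist g (V m : Set (Lp ℝ 2 ν)) + ε / 2)
      have hab : a + b ∈ (V m : Set (Lp ℝ 2 ν)) := (V m).add_mem ha hb
      have h1 : Metric.infDist (f₀ + g) (V m : Set (Lp ℝ 2 ν)) ≤ dist (f₀ + g) (a + b) :=
        Metric.infDist_le_dist_of_mem hab
      have h2 : dist (f₀ + g) (a + b) ≤ dist f₀ a + dist g b := by
        simpa [dist_eq_norm, add_sub_add_comm] using norm_add_le (f₀ - a) (g - b)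
      linarith
    have := add_le_add (hf₀_class m hm) (hg_class m hm)
    have hum := (hu_pos m).le
    nlinarith [key, this, hu_pos m]
  · -- essSup part
    have h1 := ae_le_essSup (fun θ => ENNReal.ofReal |g θ| / ENNReal.ofReal (f₀ θ)) (μ := ν)
    have h2 := ae_le_essSup (fun θ => ENNReal.ofReal |f₀ θ| / ENNReal.ofReal (finf θ)) (μ := ν)
    have hadd := Lp.coeFn_add f₀ g
    refine essSup_le_of_ae_le _ ?_
    filter_upwards [h1, h2, hadd, hf₀_nonneg] with θ hθ1 hθ2 hθadd hθ0
    have hg_le : ENNReal.ofReal |g θ| / ENNReal.ofReal (f₀ θ) ≤ ENNReal.ofReal K :=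
      hθ1.trans hg_sup
    have hf_le : ENNReal.ofReal |f₀ θ| / ENNReal.ofReal (finf θ)
        ≤ ENNReal.ofReal (K' / (1 + K)) := hθ2.trans hKK'
    -- deduce ofReal |g θ| ≤ ofReal K * ofReal (f₀ θ)
    have hgK : ENNReal.ofReal |g θ| ≤ ENNReal.ofReal K * ENNReal.ofReal (f₀ θ) := by
      rcases eq_or_ne (ENNReal.ofReal (f₀ θ)) 0 with h0 | h0
      · rcases eq_or_ne (ENNReal.ofReal |g θ|) 0 with hg0 | hg0
        · simp [hg0]
        · exfalso
          rw [h0, ENNReal.div_zero hg0] at hg_le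
          exact (ENNReal.ofReal_lt_top.trans_le hg_le).ne rfl
      · exact (ENNReal.div_le_iff h0 ENNReal.ofReal_ne_top).1 hg_le
    have habs : |(f₀ + g) θ| ≤ f₀ θ + |g θ| := by
      calc |(f₀ + g) θ| = |f₀ θ + g θ| := by rw [hθadd, Pi.add_apply]
        _ ≤ |f₀ θ| + |g θ| := abs_add_le _ _
        _ = f₀ θ + |g θ| := by rw [abs_of_nonneg hθ0]
    have hf0abs : ENNReal.ofReal |f₀ θ| = ENNReal.ofReal (f₀ θ) := by
      rw [abs_of_nonneg hθ0]
    calc ENNReal.ofReal |(f₀ + g) θ| / ENNReal.ofReal (finf θ)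
        ≤ ENNReal.ofReal (f₀ θ + |g θ|) / ENNReal.ofReal (finf θ) := by
          gcongr
      _ = (ENNReal.ofReal (f₀ θ) + ENNReal.ofReal |g θ|) / ENNReal.ofReal (finf θ) := by
          rw [ENNReal.ofReal_add hθ0 (abs_nonneg _)]
      _ ≤ (ENNReal.ofReal (f₀ θ) + ENNReal.ofReal K * ENNReal.ofReal (f₀ θ)) /
            ENNReal.ofReal (finf θ) := by gcongr
      _ = ENNReal.ofReal (1 + K) * (ENNReal.ofReal (f₀ θ) / ENNReal.ofReal (finf θ)) := by
          rw [ENNReal.ofReal_add zero_le_one hK.le, ENNReal.ofReal_one,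
            ← mul_div_assoc, add_mul, one_mul]
      _ ≤ ENNReal.ofReal (1 + K) * ENNReal.ofReal (K' / (1 + K)) := by
          gcongr; rw [← hf0abs]; exact hf_le
      _ = ENNReal.ofReal K' := by
          rw [← ENNReal.ofReal_mul (by linarith)]
          congr 1
          field_simp
end

section
/- Consider power series mixands: π_θ(k) = a_k θ^k / Z(θ) for θ ∈ Θ ⊆ [0,R) and k ∈ ℤ≥0. Then assumption (A1) — i.e. (Π1_k)_{k≥0} is a linearly independent sequence of functions in L²(ν) ∩ L¹(ν) — holds if and only if both: (i) ∫_Θ θ^k / Z(θ) ν(dθ) < ∞ for every nonnegative integer k, and (ii) ν is not a finite sum of point masses. -/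
/-! Since `0 ≤ π_θ(k) ≤ 1` and `π_θ(k) = a_k θ^k / Z(θ)`, condition (i) says that the `Π1_k`
are integrable, and then they are square-integrable as well. If `ν` is carried by finitely many
points, `L²(ν)` is finite-dimensional and has no infinite linearly independent family.
Conversely, a vanishing combination `Σ g_k Π1_k` is `P(θ) / Z(θ)` with `P = Σ g_k a_k X^k`; it
vanishes `ν`-a.e., so unless `P = 0` the measure `ν` is carried by the finitely many roots
of `P`. -/

open MeasureTheory ENNReal

section FiniteAtoms

variable {α : Type*} [MeasurableSpace α] {μ : Measure α}

theorem Filter.Eventually.of_measure_singleton_ne_zero {p : α → Prop} (h : ∀ᵐ x ∂μ, p x) {x : α}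
    (hx : μ {x} ≠ 0) : p x := by
  by_contra hpx
  exact hx (measure_mono_null (Set.singleton_subset_iff.mpr hpx) (ae_iff.mp h))

theorem exists_eq_finset_sum_smul_dirac_iff [MeasurableSingletonClass α] :
    (∃ (s : Finset α) (c : α → ℝ≥0∞), μ = ∑ x ∈ s, c x • Measure.dirac x) ↔
      ∃ T : Finset α, μ (↑T)ᶜ = 0 := by
  constructor
  · rintro ⟨s, c, rfl⟩
    exact ⟨s, by simp +contextual [Measure.finsetSum_apply, Measure.dirac_apply]⟩
  · rintro ⟨T, hT⟩
    refine ⟨T, fun x => μ {x}, Measure.ext fun A _ => ?_⟩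
    classical
    have hA : A ∩ ↑T = ↑(T.filter (· ∈ A)) := by ext; simp [and_comm]
    rw [← measure_inter_conull hT, hA, ← sum_measure_singleton, Finset.sum_filter,
      Measure.finsetSum_apply]
    refine Finset.sum_congr rfl fun x _ => ?_
    by_cases hx : x ∈ A <;> simp [Measure.dirac_apply, hx]

theorem MeasureTheory.Lp.finiteDimensional_of_measure_compl_finset_eq_zero
    {𝕜 E : Type*} [NormedField 𝕜] [NormedAddCommGroup E] [NormedSpace 𝕜 E]
    [FiniteDimensional 𝕜 E] {p : ℝ≥0∞} {T : Finset α} (hT : μ (↑T)ᶜ = 0) :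
    FiniteDimensional 𝕜 (Lp E p μ) := by
  let L : Lp E p μ →ₗ[𝕜] {x : T // μ {(x : α)} ≠ 0} → E :=
    { toFun f x := f x
      map_add' f g := funext fun x => (Lp.coeFn_add f g).of_measure_singleton_ne_zero x.2
      map_smul' c f := funext fun x => (Lp.coeFn_smul c f).of_measure_singleton_ne_zero x.2 }
  refine FiniteDimensional.of_injective L fun f g hfg => Lp.ext ?_
  have hnull : μ (⋃ x ∈ T.filter (μ {·} = 0), {x}) = 0 :=
    (measure_biUnion_null_iff (T.filter _).countable_toSet).2
      fun x hx => (Finset.mem_filter.1 hx).2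
  filter_upwards [measure_eq_zero_iff_ae_notMem.1 hT, measure_eq_zero_iff_ae_notMem.1 hnull]
    with x hxT hx0
  simp only [Set.mem_compl_iff, not_not, Finset.mem_coe] at hxT
  refine congrFun hfg ⟨⟨x, hxT⟩, fun h => hx0 ?_⟩
  simp [hxT, h]

theorem Polynomial.eq_zero_of_ae_isRoot {x : α → ℝ} (hx : Function.Injective x)
    (hμ : ∀ T : Finset α, μ (↑T)ᶜ ≠ 0) {P : Polynomial ℝ} (hP : ∀ᵐ θ ∂μ, P.IsRoot (x θ)) :
    P = 0 := by
  by_contra hP0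
  have hfin : (x ⁻¹' {r | P.IsRoot r}).Finite :=
    (Polynomial.finite_setOfPred_isRoot hP0).preimage hx.injOn
  exact hμ hfin.toFinset (by simpa [ae_iff, Set.compl_ofPred] using hP)

theorem linearIndependent_of_ae_eq_mul_pow_div {p : ℝ≥0∞} {x : α → ℝ}
    (hx : Function.Injective x) (hμ : ∀ T : Finset α, μ (↑T)ᶜ ≠ 0) {c : ℕ → ℝ}
    (hc : ∀ k, c k ≠ 0) {w : α → ℝ} (hw : ∀ θ, w θ ≠ 0) {F : ℕ → Lp ℝ p μ}
    (hF : ∀ k, F k =ᵐ[μ] fun θ => c k * x θ ^ k / w θ) :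
    LinearIndependent ℝ F := by
  classical
  rw [linearIndependent_iff']
  intro s g hg i hi
  set P : Polynomial ℝ := ∑ j ∈ s, Polynomial.monomial j (g j * c j)
  have hroot : ∀ᵐ θ ∂μ, P.IsRoot (x θ) := by
    filter_upwards [Lp.coeFn_fun_finsetSum s (fun j => g j • F j),
      (ae_ball_iff s.countable_toSet).2 fun j _ => hF j,
      (ae_ball_iff s.countable_toSet).2 fun j _ => Lp.coeFn_smul (g j) (F j),
      Lp.coeFn_zero ℝ p μ] with θ hsum hFθ hsmul hzero
    have hPθ : (∑ j ∈ s, g j * c j * x θ ^ j) / w θ = 0 :=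
      calc (∑ j ∈ s, g j * c j * x θ ^ j) / w θ = ∑ j ∈ s, (g j • F j : Lp ℝ p μ) θ := by
            rw [Finset.sum_div]
            refine Finset.sum_congr rfl fun j hj => ?_
            rw [hsmul j hj, Pi.smul_apply, hFθ j hj, smul_eq_mul]
            ring
        _ = 0 := by rw [← hsum, hg]; exact hzero
    simpa [P, Polynomial.eval_finsetSum, hw θ] using hPθ
  have hcoeff := congrArg (Polynomial.coeff · i) (Polynomial.eq_zero_of_ae_isRoot hx hμ hroot)
  simpa [P, Polynomial.finsetSum_coeff, Polynomial.coeff_monomial, hi, hc i] using hcoeff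

end FiniteAtoms

theorem MeasureTheory.Integrable.memLp_two_of_norm_le {α : Type*} [MeasurableSpace α]
    {μ : Measure α} {f : α → ℝ} (hf : Integrable f μ) {C : ℝ} (hC : ∀ᵐ x ∂μ, ‖f x‖ ≤ C) :
    MemLp f 2 μ := by
  refine (memLp_two_iff_integrable_sq hf.aestronglyMeasurable).2 <|
    (hf.norm.const_mul C).mono' (hf.aestronglyMeasurable.pow 2) ?_
  filter_upwards [hC] with x hx
  rw [norm_pow, sq]
  exact mul_le_mul_of_nonneg_right hx (norm_nonneg _)

theorem norm_mul_pow_div_tsum_mul_pow_le_one {a : ℕ → ℝ} (ha : ∀ k, 0 < a k) {t : ℝ}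
    (ht : 0 ≤ t) (hs : Summable fun k => a k * t ^ k) (k : ℕ) :
    ‖a k * t ^ k / ∑' j, a j * t ^ j‖ ≤ 1 := by
  have hterm : ∀ j, 0 ≤ a j * t ^ j := fun j => by have := ha j; positivity
  rw [Real.norm_of_nonneg (div_nonneg (hterm k) (tsum_nonneg hterm))]
  exact div_le_one_of_le₀ (hs.le_tsum k fun j _ => hterm j) (tsum_nonneg hterm)

theorem tsum_mul_pow_pos {a : ℕ → ℝ} (ha : ∀ k, 0 < a k) {t : ℝ} (ht : 0 ≤ t)
    (hs : Summable fun k => a k * t ^ k) : 0 < ∑' j, a j * t ^ j :=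
  hs.tsum_pos (fun j => by have := ha j; positivity) 0 (by simpa using ha 0)

theorem statement9_general
    (a : ℕ → ℝ) (ha_pos : ∀ k, 0 < a k)
    (R : ℝ≥0∞)
    (hR_radius : ∀ t : ℝ, 0 ≤ t →
      (ENNReal.ofReal t < R → Summable fun k => a k * t ^ k) ∧
      (R < ENNReal.ofReal t → ¬ Summable fun k => a k * t ^ k))
    (Θ : Set ℝ)
    (hΘ_sub : ∀ t ∈ Θ, 0 ≤ t ∧ ENNReal.ofReal t < R)
    (ν : Measure Θ) :
    -- (A1): the functions θ ↦ π_θ(k) belong to L²(ν) ∩ L¹(ν)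
    -- and are linearly independent in H = L²(ν)
    ((∃ Pi1 : ℕ → Lp ℝ 2 ν,
        (∀ k, ⇑(Pi1 k) =ᵐ[ν]
          fun θ => a k * (θ : ℝ) ^ k / ∑' j : ℕ, a j * (θ : ℝ) ^ j) ∧
        LinearIndependent ℝ Pi1) ∧
      (∀ k, Integrable
        (fun θ : Θ => a k * (θ : ℝ) ^ k / ∑' j : ℕ, a j * (θ : ℝ) ^ j) ν))
    ↔
    ((∀ k : ℕ, Integrable
        (fun θ : Θ => (θ : ℝ) ^ k / ∑' j : ℕ, a j * (θ : ℝ) ^ j) ν) ∧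
      ¬ ∃ (s : Finset Θ) (c : Θ → ℝ≥0∞), ν = ∑ θ ∈ s, c θ • Measure.dirac θ) := by
  have hθ : ∀ θ : Θ, 0 ≤ (θ : ℝ) := fun θ => (hΘ_sub θ θ.2).1
  have hsum : ∀ θ : Θ, Summable fun k => a k * (θ : ℝ) ^ k :=
    fun θ => (hR_radius θ (hθ θ)).1 (hΘ_sub θ θ.2).2
  have hint_iff : ∀ k, Integrable (fun θ : Θ => a k * (θ : ℝ) ^ k / ∑' j, a j * (θ : ℝ) ^ j) ν ↔
      Integrable (fun θ : Θ => (θ : ℝ) ^ k / ∑' j, a j * (θ : ℝ) ^ j) ν := fun k => by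
    simp only [mul_div_assoc]
    exact integrable_const_mul_iff (ha_pos k).ne'.isUnit _
  simp only [hint_iff, exists_eq_finset_sum_smul_dirac_iff, not_exists]
  constructor
  · rintro ⟨⟨Pi1, -, hLI⟩, hint⟩
    refine ⟨hint, fun T hT => ?_⟩
    have : FiniteDimensional ℝ (Lp ℝ 2 ν) :=
      Lp.finiteDimensional_of_measure_compl_finset_eq_zero hT
    exact Module.Finite.not_linearIndependent_of_infinite Pi1 hLI
  · rintro ⟨hint, hν⟩
    have hmem : ∀ k, MemLp (fun θ : Θ => a k * (θ : ℝ) ^ k / ∑' j, a j * (θ : ℝ) ^ j) 2 ν :=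
      fun k => ((hint_iff k).2 (hint k)).memLp_two_of_norm_le <| .of_forall fun θ =>
        norm_mul_pow_div_tsum_mul_pow_le_one ha_pos (hθ θ) (hsum θ) k
    refine ⟨⟨fun k => (hmem k).toLp, fun k => (hmem k).coeFn_toLp, ?_⟩, hint⟩
    exact linearIndependent_of_ae_eq_mul_pow_div Subtype.val_injective hν
      (fun k => (ha_pos k).ne') (fun θ => (tsum_mul_pow_pos ha_pos (hθ θ) (hsum θ)).ne')
      fun k => (hmem k).coeFn_toLp

theorem statement9
    (a : ℕ → ℝ) (ha_pos : ∀ k, 0 < a k) (ha0 : a 0 = 1)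
    (R : ℝ≥0∞) (hR_pos : 0 < R)
    (hR_radius : ∀ t : ℝ, 0 ≤ t →
      (ENNReal.ofReal t < R → Summable fun k => a k * t ^ k) ∧
      (R < ENNReal.ofReal t → ¬ Summable fun k => a k * t ^ k))
    (Θ : Set ℝ) (hΘ_meas : MeasurableSet Θ)
    (hΘ_sub : ∀ t ∈ Θ, 0 ≤ t ∧ ENNReal.ofReal t < R)
    (ν : Measure Θ) [SigmaFinite ν] :
    -- (A1): the functions θ ↦ π_θ(k) belong to L²(ν) ∩ L¹(ν)
    -- and are linearly independent in H = L²(ν)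
    ((∃ Pi1 : ℕ → Lp ℝ 2 ν,
        (∀ k, ⇑(Pi1 k) =ᵐ[ν]
          fun θ => a k * (θ : ℝ) ^ k / ∑' j : ℕ, a j * (θ : ℝ) ^ j) ∧
        LinearIndependent ℝ Pi1) ∧
      (∀ k, Integrable
        (fun θ : Θ => a k * (θ : ℝ) ^ k / ∑' j : ℕ, a j * (θ : ℝ) ^ j) ν))
    ↔
    ((∀ k : ℕ, Integrable
        (fun θ : Θ => (θ : ℝ) ^ k / ∑' j : ℕ, a j * (θ : ℝ) ^ j) ν) ∧
      ¬ ∃ (s : Finset Θ) (c : Θ → ℝ≥0∞), ν = ∑ θ ∈ s, c θ • Measure.dirac θ) :=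
  statement9_general a ha_pos R hR_radius Θ hΘ_sub ν
end

section
/- Assume (A2): there exists c_0 > 0 such that a_{k+l} ≤ c_0 a_k a_l for all nonnegative integers k, l. Then for power series mixands and any nonnegative integer m, Σ_{k≥m} ∫_Θ π_θ(k) ν(dθ) ≤ c_0 a_m ∫_Θ t^m ν(dt). -/
/-! Pointwise in `θ`, (A2) gives `a_{m+k} θ^{m+k} ≤ c₀ a_m θ^m · a_k θ^k`; summing over `k`
bounds the tail `Σ_{k ≥ m} π_θ(k)` by `c₀ a_m θ^m · Z(θ) / Z(θ)`. Integrating against `ν`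
finishes the proof, since a series of lower integrals is at most the lower integral of the
series (no measurability is needed for this direction). -/

open MeasureTheory ENNReal

section Superadditivity

variable {α : Type*} [MeasurableSpace α] (μ : Measure α) (f : ℕ → α → ℝ≥0∞)

lemma finset_sum_lintegral_le (s : Finset ℕ) :
    ∑ i ∈ s, ∫⁻ x, f i x ∂μ ≤ ∫⁻ x, ∑ i ∈ s, f i x ∂μ := by
  induction s using Finset.induction_on with
  | empty => simp
  | insert n s hns ih =>
    simp only [Finset.sum_insert hns]
    calc (∫⁻ x, f n x ∂μ) + ∑ i ∈ s, ∫⁻ x, f i x ∂μ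
        ≤ (∫⁻ x, f n x ∂μ) + ∫⁻ x, ∑ i ∈ s, f i x ∂μ := by gcongr
      _ ≤ ∫⁻ x, f n x + ∑ i ∈ s, f i x ∂μ := le_lintegral_add _ _

lemma tsum_lintegral_le : ∑' i, ∫⁻ x, f i x ∂μ ≤ ∫⁻ x, ∑' i, f i x ∂μ := by
  rw [ENNReal.tsum_eq_iSup_sum]
  exact iSup_le fun s => (finset_sum_lintegral_le μ f s).trans
    (lintegral_mono fun x => ENNReal.sum_le_tsum s)

end Superadditivity

section PowerSeriesTail

variable {a : ℕ → ℝ} {c t : ℝ} (m : ℕ)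

lemma tsum_coeff_add_mul_pow_le (ht : 0 ≤ t)
    (hs : Summable fun k => a k * t ^ k) (hA2 : ∀ k, a (m + k) ≤ c * a m * a k) :
    ∑' k, a (m + k) * t ^ (m + k) ≤ c * a m * t ^ m * ∑' k, a k * t ^ k := by
  have hs_shift : Summable fun k => a (m + k) * t ^ (m + k) := by
    simpa only [add_comm m] using (summable_nat_add_iff m).2 hs
  rw [← tsum_mul_left]
  refine hs_shift.tsum_le_tsum (fun k => ?_) (hs.mul_left _)
  calc a (m + k) * t ^ (m + k) ≤ c * a m * a k * t ^ (m + k) := by gcongr; exact hA2 k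
    _ = c * a m * t ^ m * (a k * t ^ k) := by rw [pow_add]; ring

lemma tsum_ofReal_coeff_add_mul_pow_div_le (ha : ∀ k, 0 < a k) (ht : 0 ≤ t)
    (hs : Summable fun k => a k * t ^ k) (hA2 : ∀ k, a (m + k) ≤ c * a m * a k) :
    ∑' k, ENNReal.ofReal (a (m + k) * t ^ (m + k) / ∑' j, a j * t ^ j)
      ≤ ENNReal.ofReal (c * a m) * ENNReal.ofReal (t ^ m) := by
  have hZ : 0 < ∑' j, a j * t ^ j := by
    refine (ha 0).trans_le ?_
    simpa using hs.le_tsum 0 fun j _ => mul_nonneg (ha j).le (pow_nonneg ht j)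
  have hterm : ∀ k, 0 ≤ a (m + k) * t ^ (m + k) / ∑' j, a j * t ^ j :=
    fun k => div_nonneg (mul_nonneg (ha _).le (pow_nonneg ht _)) hZ.le
  have hs_shift : Summable fun k => a (m + k) * t ^ (m + k) / ∑' j, a j * t ^ j := by
    simpa only [add_comm m] using ((summable_nat_add_iff m).2 hs).div_const _
  rw [← ENNReal.ofReal_tsum_of_nonneg hterm hs_shift, ← ENNReal.ofReal_mul' (pow_nonneg ht m),
    tsum_div_const]
  refine ENNReal.ofReal_le_ofReal ((div_le_iff₀ hZ).2 ?_)
  exact tsum_coeff_add_mul_pow_le m ht hs hA2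

end PowerSeriesTail

theorem statement10_general
    (a : ℕ → ℝ) (ha_pos : ∀ k, 0 < a k)
    (R : ℝ≥0∞)
    (hR_radius : ∀ t : ℝ, 0 ≤ t →
      (ENNReal.ofReal t < R → Summable fun k => a k * t ^ k) ∧
      (R < ENNReal.ofReal t → ¬ Summable fun k => a k * t ^ k))
    (Θ : Set ℝ)
    (hΘ_sub : ∀ t ∈ Θ, 0 ≤ t ∧ ENNReal.ofReal t < R)
    (ν : Measure Θ)
    (c₀ : ℝ)
    (hA2 : ∀ k l : ℕ, a (k + l) ≤ c₀ * a k * a l)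
    (m : ℕ) :
    ∑' k : ℕ,
        ∫⁻ θ : Θ, ENNReal.ofReal
          (a (m + k) * (θ : ℝ) ^ (m + k) / ∑' j : ℕ, a j * (θ : ℝ) ^ j) ∂ν
      ≤ ENNReal.ofReal (c₀ * a m) * ∫⁻ θ : Θ, ENNReal.ofReal ((θ : ℝ) ^ m) ∂ν := by
  have hpointwise : ∀ θ : Θ, ∑' k, ENNReal.ofReal
      (a (m + k) * (θ : ℝ) ^ (m + k) / ∑' j, a j * (θ : ℝ) ^ j)
        ≤ ENNReal.ofReal (c₀ * a m) * ENNReal.ofReal ((θ : ℝ) ^ m) := fun θ => by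
    obtain ⟨hθ_nonneg, hθ_lt⟩ := hΘ_sub θ θ.2
    exact tsum_ofReal_coeff_add_mul_pow_div_le m ha_pos hθ_nonneg
      ((hR_radius θ hθ_nonneg).1 hθ_lt) (hA2 m)
  calc _ ≤ ∫⁻ θ : Θ, ∑' k, ENNReal.ofReal
          (a (m + k) * (θ : ℝ) ^ (m + k) / ∑' j, a j * (θ : ℝ) ^ j) ∂ν := tsum_lintegral_le ν _
    _ ≤ ∫⁻ θ : Θ, ENNReal.ofReal (c₀ * a m) * ENNReal.ofReal ((θ : ℝ) ^ m) ∂ν :=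
        lintegral_mono hpointwise
    _ = _ := lintegral_const_mul' _ _ ENNReal.ofReal_ne_top

theorem statement10
    (a : ℕ → ℝ) (ha_pos : ∀ k, 0 < a k) (ha0 : a 0 = 1)
    (R : ℝ≥0∞) (hR_pos : 0 < R)
    (hR_radius : ∀ t : ℝ, 0 ≤ t →
      (ENNReal.ofReal t < R → Summable fun k => a k * t ^ k) ∧
      (R < ENNReal.ofReal t → ¬ Summable fun k => a k * t ^ k))
    (Θ : Set ℝ) (hΘ_meas : MeasurableSet Θ)
    (hΘ_sub : ∀ t ∈ Θ, 0 ≤ t ∧ ENNReal.ofReal t < R)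
    (ν : Measure Θ)
    (c₀ : ℝ) (hc₀ : 0 < c₀)
    (hA2 : ∀ k l : ℕ, a (k + l) ≤ c₀ * a k * a l)
    (m : ℕ) :
    ∑' k : ℕ,
        ∫⁻ θ : Θ, ENNReal.ofReal
          (a (m + k) * (θ : ℝ) ^ (m + k) / ∑' j : ℕ, a j * (θ : ℝ) ^ j) ∂ν
      ≤ ENNReal.ofReal (c₀ * a m) * ∫⁻ θ : Θ, ENNReal.ofReal ((θ : ℝ) ^ m) ∂ν :=
  statement10_general a ha_pos R hR_radius Θ hΘ_sub ν c₀ hA2 m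
end
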